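/- arXiv:1902.09433 — 3 statements merged into one kernel-verified Lean document; each statement's English description precedes it below -/
import Mathlib

section
/- Let β > 0. For all v, v' ∈ ℝ³ with ‖v'‖ ≤ ‖v‖ one has λ(v') ≤ λ(v); in particular λ(v) ≥ λ(0) > 0 for every v ∈ ℝ³. -/
/-! λ is π times an average, against the Maxwellian, of the convex functions v ↦ ‖v − w‖, hence
convex; and since the Maxwellian is radial, the reflection exchanging two vectors of equal norm
leaves λ unchanged. A convex function φ that depends only on the norm is radially nondecreasing:
φ(0) ≤ max (φ v) (φ (−v)) = φ v, and a vector of norm ‖v'‖ ≤ ‖v‖ lies on the segment [0, v]. -/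

open MeasureTheory

noncomputable section

abbrev E3 := EuclideanSpace ℝ (Fin 3)

/-- The Maxwellian density with inverse temperature `β` on `ℝ³`. -/
def Mβ (β : ℝ) (v : E3) : ℝ :=
  (β / (2 * Real.pi)) ^ ((3 : ℝ) / 2) * Real.exp (-(β / 2) * ‖v‖ ^ 2)

/-- The collision frequency `λ(v) = π ∫ M_β(w) ‖v − w‖ dw`. -/
def lam (β : ℝ) (v : E3) : ℝ := Real.pi * ∫ w : E3, Mβ β w * ‖v - w‖

open Set

section Convexity

variable {E : Type*} [NormedAddCommGroup E] [NormedSpace ℝ E]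

theorem ConvexOn.le_of_norm_le {φ : E → ℝ} (hφ : ConvexOn ℝ univ φ)
    (hrad : ∀ x y : E, ‖x‖ = ‖y‖ → φ x = φ y) {x y : E} (h : ‖y‖ ≤ ‖x‖) : φ y ≤ φ x := by
  have hzero : φ 0 ≤ φ x := by
    have h0 : (0 : E) ∈ segment ℝ x (-x) := ⟨1 / 2, 1 / 2, by norm_num, by norm_num, by norm_num,
      by simp⟩
    simpa [hrad (-x) x (norm_neg x)] using hφ.le_on_segment trivial trivial h0
  rcases eq_or_ne x 0 with rfl | hx
  · rw [norm_le_zero_iff.mp (h.trans_eq norm_zero)]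
  set s := ‖y‖ / ‖x‖
  have hxpos : 0 < ‖x‖ := norm_pos_iff.mpr hx
  have hs : s ∈ Icc (0 : ℝ) 1 := ⟨by positivity, div_le_one_of_le₀ h hxpos.le⟩
  have hy : φ y = φ (s • x) := hrad y _ <| by
    rw [norm_smul, Real.norm_of_nonneg hs.1, div_mul_cancel₀ _ hxpos.ne']
  have hseg : s • x ∈ segment ℝ (0 : E) x := ⟨1 - s, s, by linarith [hs.2], hs.1, by ring, by simp⟩
  calc φ y = φ (s • x) := hy
    _ ≤ max (φ 0) (φ x) := hφ.le_on_segment trivial trivial hseg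
    _ = φ x := max_eq_right hzero

variable {α : Type*} [MeasurableSpace α] {μ : Measure α}

theorem convexOn_integral {F : E → α → ℝ} (hF : ∀ w, ConvexOn ℝ univ (F · w))
    (hint : ∀ v, Integrable (F v) μ) : ConvexOn ℝ univ (fun v => ∫ w, F v w ∂μ) := by
  refine ⟨convex_univ, fun x _ y _ a b ha hb hab => ?_⟩
  calc ∫ w, F (a • x + b • y) w ∂μ ≤ ∫ w, (a * F x w + b * F y w) ∂μ :=
        integral_mono (hint _) (((hint x).const_mul a).add ((hint y).const_mul b))
          fun w => (hF w).2 trivial trivial ha hb hab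
    _ = a • ∫ w, F x w ∂μ + b • ∫ w, F y w ∂μ := by
        rw [integral_add ((hint x).const_mul a) ((hint y).const_mul b), integral_const_mul,
          integral_const_mul, smul_eq_mul, smul_eq_mul]

end Convexity

section Radial

variable {E : Type*} [NormedAddCommGroup E] [InnerProductSpace ℝ E] [FiniteDimensional ℝ E]
  [MeasurableSpace E] [BorelSpace E]

theorem integral_radial_mul_norm_sub_eq_of_norm_eq (g : ℝ → ℝ) {x y : E} (h : ‖x‖ = ‖y‖) :
    ∫ w, g ‖w‖ * ‖x - w‖ = ∫ w, g ‖w‖ * ‖y - w‖ := by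
  let R : E ≃ₗᵢ[ℝ] E := Submodule.reflection (ℝ ∙ (x - y))ᗮ
  have hRx : R x = y := Submodule.reflection_sub h
  rw [← R.measurePreserving.integral_comp R.toHomeomorph.measurableEmbedding]
  congr 1 with w
  rw [R.norm_map, ← R.norm_map (x - R w), map_sub, hRx]
  simp [R]

end Radial

section Gaussian

variable {E : Type*} [NormedAddCommGroup E] [NormedSpace ℝ E] [FiniteDimensional ℝ E]
  [Nontrivial E] [MeasurableSpace E] [BorelSpace E] (μ : Measure E) [μ.IsAddHaarMeasure]

theorem integrable_norm_pow_mul_exp_neg_mul_sq {b : ℝ} (hb : 0 < b) (k : ℕ) :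
    Integrable (fun x : E => ‖x‖ ^ k * Real.exp (-b * ‖x‖ ^ 2)) μ := by
  rw [integrable_fun_norm_addHaar μ (f := fun r => r ^ k * Real.exp (-b * r ^ 2))]
  refine (integrableOn_rpow_mul_exp_neg_mul_sq hb (s := ((Module.finrank ℝ E - 1 + k : ℕ) : ℝ))
    (neg_one_lt_zero.trans_le (Nat.cast_nonneg _))).congr_fun (fun r _ => ?_) measurableSet_Ioi
  simp only [Real.rpow_natCast, smul_eq_mul, pow_add, mul_assoc]

end Gaussian

theorem Integrable.mul_norm_sub {E : Type*} [NormedAddCommGroup E] [MeasurableSpace E]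
    [OpensMeasurableSpace E] {μ : Measure E} {f : E → ℝ} (hf : Integrable f μ)
    (hf₁ : Integrable (fun w => f w * ‖w‖) μ) (v : E) :
    Integrable (fun w => f w * ‖v - w‖) μ := by
  refine ((hf.norm.const_mul ‖v‖).add hf₁.norm).mono'
    (hf.aestronglyMeasurable.mul (by fun_prop : Continuous fun w => ‖v - w‖).aestronglyMeasurable)
    (.of_forall fun w => ?_)
  simp only [Pi.add_apply, norm_mul, norm_norm]
  nlinarith [norm_sub_le v w, norm_nonneg (f w)]

section Maxwellian

variable {β : ℝ}

theorem Mβ_pos (hβ : 0 < β) (v : E3) : 0 < Mβ β v := by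
  unfold Mβ
  positivity

@[fun_prop]
theorem continuous_Mβ (β : ℝ) : Continuous (Mβ β) := by
  unfold Mβ
  fun_prop

theorem integrable_Mβ_mul_norm_pow (hβ : 0 < β) (k : ℕ) :
    Integrable (fun w => Mβ β w * ‖w‖ ^ k) := by
  refine ((integrable_norm_pow_mul_exp_neg_mul_sq volume (half_pos hβ) k).const_mul
    ((β / (2 * Real.pi)) ^ ((3 : ℝ) / 2))).congr (.of_forall fun w => ?_)
  simp only [Mβ, neg_mul]
  ring

theorem integrable_Mβ_mul_norm_sub (hβ : 0 < β) (v : E3) :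
    Integrable (fun w => Mβ β w * ‖v - w‖) :=
  Integrable.mul_norm_sub (f := Mβ β) (by simpa using integrable_Mβ_mul_norm_pow hβ 0)
    (by simpa using integrable_Mβ_mul_norm_pow hβ 1) v

theorem convexOn_lam (hβ : 0 < β) : ConvexOn ℝ univ (lam β) :=
  (convexOn_integral (fun w => ((convexOn_norm convex_univ).translate_left (-w)).smul
    (Mβ_pos hβ w).le) (integrable_Mβ_mul_norm_sub hβ)).smul Real.pi_pos.le

theorem lam_eq_of_norm_eq (β : ℝ) {x y : E3} (h : ‖x‖ = ‖y‖) : lam β x = lam β y :=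
  congrArg (Real.pi * ·) <| integral_radial_mul_norm_sub_eq_of_norm_eq
    (fun r => (β / (2 * Real.pi)) ^ ((3 : ℝ) / 2) * Real.exp (-(β / 2) * r ^ 2)) h

theorem lam_zero_pos (hβ : 0 < β) : 0 < lam β 0 := by
  obtain ⟨w, hw⟩ := exists_ne (0 : E3)
  refine mul_pos Real.pi_pos (integral_pos_of_integrable_nonneg_nonzero (x := w) (by fun_prop)
    (integrable_Mβ_mul_norm_sub hβ 0) (fun w => mul_nonneg (Mβ_pos hβ w).le (norm_nonneg _)) ?_)
  simpa using ⟨(Mβ_pos hβ w).ne', hw⟩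

end Maxwellian

/-- The collision frequency is radially monotone: `‖v'‖ ≤ ‖v‖` implies `λ(v') ≤ λ(v)`;
in particular `λ(v) ≥ λ(0) > 0` for every `v`. -/
theorem lam_radially_monotone (β : ℝ) (hβ : 0 < β) :
    (∀ v v' : E3, ‖v'‖ ≤ ‖v‖ → lam β v' ≤ lam β v) ∧
    0 < lam β 0 ∧ ∀ v : E3, lam β 0 ≤ lam β v := by
  have hmono : ∀ v v' : E3, ‖v'‖ ≤ ‖v‖ → lam β v' ≤ lam β v := fun _ _ =>
    (convexOn_lam hβ).le_of_norm_le (fun _ _ => lam_eq_of_norm_eq β)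
  exact ⟨hmono, lam_zero_pos hβ, fun v => hmono v 0 (by simp)⟩
end
end

section
/- There exists a universal constant C > 0 such that for every r > 0, every x ∈ ℝ³ \ {0}, and all a, b ∈ ℝ³: ∫_{Cyl_r(x)} 1/(‖v−a‖·‖v−b‖) dv ≤ C·r, where Cyl_r(x) = {v ∈ ℝ³ : dist(v, ℝ·x) ≤ r} is the infinite cylinder of radius r around the line ℝ·x = {t·x : t ∈ ℝ}, and the integral is with respect to Lebesgue measure (in particular the integrand is integrable on Cyl_r(x)). -/
open MeasureTheory

noncomputable section

/-- The infinite cylinder of radius `r` around the line `ℝ·x`. -/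
def Cyl (r : ℝ) (x : E3) : Set E3 :=
  {v : E3 | Metric.infDist v {z : E3 | ∃ t : ℝ, z = t • x} ≤ r}

/-!
By AM-GM, `1 / (‖v - a‖ ‖v - b‖) ≤ (‖v - a‖⁻² + ‖v - b‖⁻²) / 2`, so it suffices to bound the
integral of `‖v - a‖⁻²` over the cylinder. Split `ℝ³` orthogonally into the axis `L` and the
cross-section plane `P`, and write `a = (α, β)`. For `y ∈ P` the integral over the axis is
`∫ ds / (‖s - α‖² + ‖y - β‖²) = π / ‖y - β‖`, and over the disc of radius `r` in `P`,
`∫ dy / ‖y - β‖ ≤ 3π r`: the part of the disc at distance `≥ r` from `β` contributes at most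
`r⁻¹ · π r²`, and the rest at most `∫_{‖y‖ < r} dy / ‖y‖ = 2π r`. Hence `C = 3π²` works.
-/

open Metric ENNReal Module Set Real

theorem integrable_inv_sq_add_sq {c : ℝ} (hc : c ≠ 0) :
    Integrable fun t : ℝ => (t ^ 2 + c ^ 2)⁻¹ := by
  have h := (integrable_inv_one_add_sq.comp_mul_left' (inv_ne_zero hc)).const_mul (c ^ 2)⁻¹
  refine h.congr (ae_of_all _ fun t => ?_)
  field_simp
  ring

theorem integral_univ_inv_sq_add_sq {c : ℝ} (hc : 0 < c) :
    ∫ t : ℝ, (t ^ 2 + c ^ 2)⁻¹ = π / c := by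
  have h : ∀ t : ℝ, (t ^ 2 + c ^ 2)⁻¹ = (c ^ 2)⁻¹ * (1 + (c⁻¹ * t) ^ 2)⁻¹ := fun t => by
    field_simp
    ring
  simp_rw [h]
  rw [integral_const_mul, Measure.integral_comp_mul_left (fun u : ℝ => (1 + u ^ 2)⁻¹),
    integral_univ_inv_one_add_sq, inv_inv, abs_of_pos hc, smul_eq_mul]
  field_simp

section LinePlane

variable {L : Type*} [NormedAddCommGroup L] [InnerProductSpace ℝ L] [FiniteDimensional ℝ L]
  [MeasurableSpace L] [BorelSpace L]
  {P : Type*} [NormedAddCommGroup P] [InnerProductSpace ℝ P] [FiniteDimensional ℝ P]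
  [MeasurableSpace P] [BorelSpace P]

theorem lintegral_inv_norm_sq_add_sq (hL : finrank ℝ L = 1) {c : ℝ} (hc : 0 < c) :
    ∫⁻ s : L, ENNReal.ofReal ((‖s‖ ^ 2 + c ^ 2)⁻¹) = ENNReal.ofReal (π / c) := by
  have : Nontrivial L := Module.nontrivial_of_finrank_eq_succ hL
  obtain ⟨u, hu⟩ := exists_norm_eq L zero_le_one
  have hu' : ‖u‖ₑ = 1 := by rw [← ofReal_norm, hu, ENNReal.ofReal_one]
  rw [volume_eq_of_finrank_eq_one hL (norm_ne_zero_iff.1 (hu.trans_ne one_ne_zero)), hu',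
    one_smul, lintegral_map (by fun_prop) (by fun_prop), ← integral_univ_inv_sq_add_sq hc,
    ofReal_integral_eq_lintegral_ofReal (integrable_inv_sq_add_sq hc.ne')
      (ae_of_all _ fun t => by positivity)]
  simp [norm_smul, hu]

theorem volume_ball_of_finrank_eq_two (hP : finrank ℝ P = 2) (x : P) (r : ℝ) :
    volume (ball x r) = ENNReal.ofReal r ^ 2 * ENNReal.ofReal π := by
  have : Nontrivial P := Module.nontrivial_of_finrank_eq_succ hP
  simp [InnerProductSpace.volume_ball_of_dim_even (k := 1) hP, hP]

theorem lintegral_ball_inv_norm (hP : finrank ℝ P = 2) {r : ℝ} (hr : 0 ≤ r) :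
    ∫⁻ y in ball (0 : P) r, ENNReal.ofReal ‖y‖⁻¹ = ENNReal.ofReal (2 * π * r) := by
  have : Nontrivial P := Module.nontrivial_of_finrank_eq_succ hP
  let f : ℝ → ℝ := (Iio r).indicator fun t => t⁻¹
  -- in polar coordinates the radial weight `t` cancels the singularity `t⁻¹`
  have hf : EqOn (fun t : ℝ => t ^ (finrank ℝ P - 1) • f t) ((Iio r).indicator 1) (Ioi 0) := by
    intro t (ht : 0 < t)
    by_cases htr : t < r <;> simp [f, hP, htr, ht.ne']
  have hball : (ball (0 : P) r).indicator (fun y => ENNReal.ofReal ‖y‖⁻¹) =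
      fun y => ENNReal.ofReal (f ‖y‖) := funext fun y => by
    by_cases hy : ‖y‖ < r <;> simp [f, hy]
  have hint : Integrable (fun y : P => f ‖y‖) := by
    rw [integrable_fun_norm_addHaar, integrableOn_congr_fun hf measurableSet_Ioi, IntegrableOn,
      integrable_indicator_iff measurableSet_Iio]
    exact integrableOn_const (by simp [Measure.restrict_apply measurableSet_Iio, Iio_inter_Ioi])
      (by simp)
  rw [← lintegral_indicator measurableSet_ball, hball,
    ← ofReal_integral_eq_lintegral_ofReal hint (ae_of_all _ fun y => ?_),
    integral_fun_norm_addHaar, setIntegral_congr_fun measurableSet_Ioi hf,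
    integral_indicator_one measurableSet_Iio]
  · simp [Measure.real, volume_ball_of_finrank_eq_two hP, hP, hr, Iio_inter_Ioi, pi_nonneg,
      mul_assoc]
  · simp only [f, indicator]
    split_ifs <;> positivity

theorem lintegral_closedBall_inv_norm_sub_le (hP : finrank ℝ P = 2) {r : ℝ} (hr : 0 < r)
    (β : P) :
    ∫⁻ y in closedBall (0 : P) r, ENNReal.ofReal ‖y - β‖⁻¹ ≤ ENNReal.ofReal (3 * π * r) := by
  have : Nontrivial P := Module.nontrivial_of_finrank_eq_succ hP
  let F := (ball (0 : P) r).indicator fun z => ENNReal.ofReal ‖z‖⁻¹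
  have hsplit : ∀ y, ENNReal.ofReal ‖y - β‖⁻¹ ≤ ENNReal.ofReal r⁻¹ + F (y - β) := fun y => by
    by_cases hy : ‖y - β‖ < r
    · simp [F, hy]
    · simp only [F, mem_ball_zero_iff, hy, not_false_eq_true, indicator_of_notMem, add_zero]
      exact ENNReal.ofReal_le_ofReal (inv_anti₀ hr (not_lt.1 hy))
  calc ∫⁻ y in closedBall (0 : P) r, ENNReal.ofReal ‖y - β‖⁻¹
      ≤ ∫⁻ y in closedBall (0 : P) r, (ENNReal.ofReal r⁻¹ + F (y - β)) := lintegral_mono hsplit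
    _ ≤ ENNReal.ofReal r⁻¹ * volume (closedBall (0 : P) r) + ∫⁻ y, F (y - β) := by
      rw [lintegral_add_left measurable_const, setLIntegral_const]
      gcongr
      exact Measure.restrict_le_self
    _ = ENNReal.ofReal (3 * π * r) := by
      rw [lintegral_sub_right_eq_self, lintegral_indicator measurableSet_ball,
        lintegral_ball_inv_norm hP hr.le, Measure.addHaar_closedBall_eq_addHaar_ball,
        volume_ball_of_finrank_eq_two hP, ← ENNReal.ofReal_pow hr.le,
        ← ENNReal.ofReal_mul (by positivity), ← ENNReal.ofReal_mul (by positivity),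
        ← ENNReal.ofReal_add (by positivity) (by positivity)]
      congr 1
      field_simp
      ring

theorem lintegral_univ_prod_closedBall_inv_norm_sub_sq_le (hL : finrank ℝ L = 1)
    (hP : finrank ℝ P = 2) {r : ℝ} (hr : 0 < r) (a : L × P) :
    ∫⁻ p in univ ×ˢ closedBall (0 : P) r, ENNReal.ofReal ((‖p.1 - a.1‖ ^ 2 + ‖p.2 - a.2‖ ^ 2)⁻¹)
      ≤ ENNReal.ofReal (3 * π ^ 2 * r) := by
  have : Nontrivial P := Module.nontrivial_of_finrank_eq_succ hP
  have hline : ∀ y ≠ a.2, ∫⁻ s : L, ENNReal.ofReal ((‖s - a.1‖ ^ 2 + ‖y - a.2‖ ^ 2)⁻¹)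
      = ENNReal.ofReal π * ENNReal.ofReal ‖y - a.2‖⁻¹ := fun y hy => by
    rw [lintegral_sub_right_eq_self (fun s => ENNReal.ofReal ((‖s‖ ^ 2 + ‖y - a.2‖ ^ 2)⁻¹)),
      lintegral_inv_norm_sq_add_sq hL (norm_pos_iff.2 (sub_ne_zero.2 hy)), div_eq_mul_inv,
      ENNReal.ofReal_mul pi_nonneg]
  calc ∫⁻ p in univ ×ˢ closedBall (0 : P) r,
        ENNReal.ofReal ((‖p.1 - a.1‖ ^ 2 + ‖p.2 - a.2‖ ^ 2)⁻¹)
      = ∫⁻ y in closedBall (0 : P) r, ∫⁻ s : L,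
          ENNReal.ofReal ((‖s - a.1‖ ^ 2 + ‖y - a.2‖ ^ 2)⁻¹) := by
        rw [Measure.volume_eq_prod, ← Measure.prod_restrict, Measure.restrict_univ,
          lintegral_prod_symm _ (by fun_prop)]
    _ = ENNReal.ofReal π * ∫⁻ y in closedBall (0 : P) r, ENNReal.ofReal ‖y - a.2‖⁻¹ := by
        rw [← lintegral_const_mul _ (by fun_prop)]
        exact lintegral_congr_ae ((ae_restrict_of_ae (volume.ae_ne a.2)).mono hline)
    _ ≤ ENNReal.ofReal π * ENNReal.ofReal (3 * π * r) := by
        gcongr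
        exact lintegral_closedBall_inv_norm_sub_le hP hr a.2
    _ = ENNReal.ofReal (3 * π ^ 2 * r) := by
        rw [← ENNReal.ofReal_mul pi_nonneg]
        ring_nf

end LinePlane

section Tube

variable {E : Type*} [NormedAddCommGroup E] [InnerProductSpace ℝ E]

theorem infDist_eq_norm_orthogonalProjectionOnto_orthogonal (K : Submodule ℝ E)
    [K.HasOrthogonalProjection] (v : E) : infDist v K = ‖Kᗮ.orthogonalProjectionOnto v‖ := by
  rw [infDist_eq_iInf, Submodule.orthogonalProjectionOnto_orthogonal]
  simp only [dist_eq_norm]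
  exact (K.starProjection_minimal v).symm

variable [FiniteDimensional ℝ E] [MeasurableSpace E] [BorelSpace E]

theorem measurePreserving_orthogonalProjectionOnto_prod (K : Submodule ℝ E) :
    MeasurePreserving fun v => (K.orthogonalProjectionOnto v, Kᗮ.orthogonalProjectionOnto v) := by
  convert (WithLp.volume_preserving_ofLp K Kᗮ).comp K.orthogonalDecomposition.measurePreserving
    using 1
  ext v <;> simp

theorem lintegral_setOf_infDist_span_le_inv_norm_sub_sq_le (hE : finrank ℝ E = 3) {x : E}
    (hx : x ≠ 0) {r : ℝ} (hr : 0 < r) (a : E) :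
    ∫⁻ v in {v | infDist v (ℝ ∙ x) ≤ r}, ENNReal.ofReal ((‖v - a‖ ^ 2)⁻¹)
      ≤ ENNReal.ofReal (3 * π ^ 2 * r) := by
  set K := ℝ ∙ x
  have : Fact (finrank ℝ E = 2 + 1) := ⟨hE⟩
  let φ v := (K.orthogonalProjectionOnto v, Kᗮ.orthogonalProjectionOnto v)
  have hφ : MeasurePreserving φ := measurePreserving_orthogonalProjectionOnto_prod K
  have htube : {v | infDist v K ≤ r} = φ ⁻¹' (univ ×ˢ closedBall 0 r) := by
    ext v
    simp [φ, infDist_eq_norm_orthogonalProjectionOnto_orthogonal]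
  have hnorm : ∀ v, ‖v - a‖ ^ 2 = ‖(φ v).1 - (φ a).1‖ ^ 2 + ‖(φ v).2 - (φ a).2‖ ^ 2 := fun v => by
    simp only [φ, ← map_sub, ← K.norm_sq_eq_add_norm_sq_projection]
  simp_rw [htube, hnorm]
  exact (hφ.setLIntegral_comp_preimage (MeasurableSet.univ.prod measurableSet_closedBall)
    (f := fun p => ENNReal.ofReal ((‖p.1 - (φ a).1‖ ^ 2 + ‖p.2 - (φ a).2‖ ^ 2)⁻¹))
    (by fun_prop)).trans_le <| lintegral_univ_prod_closedBall_inv_norm_sub_sq_le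
      (finrank_span_singleton hx) (Submodule.finrank_orthogonal_span_singleton hx) hr (φ a)

end Tube

theorem one_div_mul_le_inv_sq_add_inv_sq (s t : ℝ) :
    1 / (s * t) ≤ ((s ^ 2)⁻¹ + (t ^ 2)⁻¹) / 2 := by
  rw [one_div, mul_inv, ← inv_pow, ← inv_pow]
  linarith [two_mul_le_add_sq s⁻¹ t⁻¹]

theorem integrableOn_and_setIntegral_le_of_setLIntegral_le {α : Type*} [MeasurableSpace α]
    {μ : Measure α} {s : Set α} {f : α → ℝ} (hf : AEStronglyMeasurable f (μ.restrict s))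
    (hf₀ : 0 ≤ᵐ[μ.restrict s] f) {c : ℝ} (hc : 0 ≤ c)
    (h : ∫⁻ x in s, ENNReal.ofReal (f x) ∂μ ≤ ENNReal.ofReal c) :
    IntegrableOn f s μ ∧ ∫ x in s, f x ∂μ ≤ c :=
  ⟨⟨hf, (hasFiniteIntegral_iff_ofReal hf₀).2 (h.trans_lt ofReal_lt_top)⟩,
    integral_eq_lintegral_of_nonneg_ae hf₀ hf ▸ toReal_le_of_le_ofReal hc h⟩

theorem cyl_eq_setOf_infDist_span_le (r : ℝ) (x : E3) :
    Cyl r x = {v | infDist v (ℝ ∙ x) ≤ r} := by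
  have hline : {z : E3 | ∃ t : ℝ, z = t • x} = (ℝ ∙ x : Set E3) := by
    ext z
    simp [Submodule.mem_span_singleton, eq_comm]
  rw [Cyl, hline]

/-- There is a universal constant `C > 0` such that for every `r > 0`, every `x ≠ 0` and
all `a, b ∈ ℝ³`, the function `v ↦ 1/(‖v−a‖‖v−b‖)` is integrable on the cylinder
`Cyl_r(x)` and its integral there is at most `C r`. -/
theorem cylinder_double_singular_integral :
    ∃ C : ℝ, 0 < C ∧ ∀ r : ℝ, 0 < r → ∀ x : E3, x ≠ 0 → ∀ a b : E3,
      IntegrableOn (fun v : E3 => 1 / (‖v - a‖ * ‖v - b‖)) (Cyl r x) ∧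
      (∫ v in Cyl r x, 1 / (‖v - a‖ * ‖v - b‖)) ≤ C * r := by
  refine ⟨3 * π ^ 2, by positivity, fun r hr x hx a b => ?_⟩
  have hsingle := lintegral_setOf_infDist_span_le_inv_norm_sub_sq_le
    finrank_euclideanSpace_fin hx hr
  refine integrableOn_and_setIntegral_le_of_setLIntegral_le
    (by fun_prop : Measurable fun v : E3 => 1 / (‖v - a‖ * ‖v - b‖)).aestronglyMeasurable
    (ae_of_all _ fun v => by positivity) (by positivity) ?_
  rw [cyl_eq_setOf_infDist_span_le]
  set S := {v : E3 | infDist v (ℝ ∙ x) ≤ r}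
  calc ∫⁻ v in S, ENNReal.ofReal (1 / (‖v - a‖ * ‖v - b‖))
      ≤ ∫⁻ v in S, (ENNReal.ofReal ((‖v - a‖ ^ 2)⁻¹) + ENNReal.ofReal ((‖v - b‖ ^ 2)⁻¹)) / 2 :=
        lintegral_mono fun v => by
          grw [one_div_mul_le_inv_sq_add_inv_sq, ENNReal.ofReal_div_of_pos two_pos,
            ENNReal.ofReal_add (by positivity) (by positivity), ENNReal.ofReal_ofNat]
    _ ≤ (ENNReal.ofReal (3 * π ^ 2 * r) + ENNReal.ofReal (3 * π ^ 2 * r)) / 2 := by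
        simp_rw [div_eq_mul_inv]
        rw [lintegral_mul_const' _ _ (by simp), lintegral_add_left (by fun_prop)]
        gcongr <;> apply hsingle
    _ = ENNReal.ofReal (3 * π ^ 2 * r) := by rw [ENNReal.add_div, ENNReal.add_halves]
end
end

section
/- Let β > 0 and define Ψ_n(μ,t) as in the context. There exist constants C > 0 and c > 0 (depending only on β) such that for all μ > 0 and all t ≥ 0 with μ·t ≤ c, the series Σ_{n≥0} n²·Ψ_n(μ,t) converges and Σ_{n≥0} n²·Ψ_n(μ,t) ≤ C·( μ·t + (μ·t)² ). (This is the short-time bound on the second moment of the number of collisions of the stationary linear Boltzmann jump process.) -/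
open MeasureTheory

noncomputable section

/-- `e(v,v') = (β/(2π))^(1/2) · exp(−(β/2)·((v'·(v'−v))/‖v'−v‖)²)`, the integral of `M_β`
over the plane `E(v,v')`. -/
def eFun (β : ℝ) (v v' : E3) : ℝ :=
  (β / (2 * Real.pi)) ^ ((1 : ℝ) / 2) *
    Real.exp (-(β / 2) * ((inner ℝ v' (v' - v) : ℝ) / ‖v' - v‖) ^ 2)

/-- The full velocity vector `(v₀, v₁, …, vₙ)` obtained by prepending the initial
velocity `v₀` to the post-collisional velocities `w = (v₁, …, vₙ)`. -/
def consV {m : ℕ} (v₀ : E3) (w : Fin m → E3) : Fin (m + 1) → E3 := Fin.cons v₀ w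

/-- The full time vector `(t₀, t₁, …, tₙ)` with `t₀ = t` and collision times
`τ = (t₁, …, tₙ)`. -/
def consT {m : ℕ} (t : ℝ) (τ : Fin m → ℝ) : Fin (m + 1) → ℝ := Fin.cons t τ

/-- The weight `Ψ_n(μ,t)` of `n` collisions up to time `t` for the stationary linear
Boltzmann jump process: `Ψ_0(μ,t) = ∫ M_β(v₀) e^{−μλ(v₀)t} dv₀`, and for `n ≥ 1`,
`Ψ_n(μ,t) = μⁿ ∫ M_β(v₀) ∫_{0 ≤ tₙ ≤ ⋯ ≤ t₁ ≤ t} ∫_{(ℝ³)ⁿ}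
   (Π_{i=1}^n e(v_{i−1},v_i)/‖v_i − v_{i−1}‖)
   e^{−μ(Σ_{i=0}^{n−1} λ(v_i)(t_i − t_{i+1}) + λ(v_n) tₙ)} dv dt dv₀` with `t₀ = t`. -/
def Psi (β μ t : ℝ) : ℕ → ℝ
  | 0 => ∫ v₀ : E3, Mβ β v₀ * Real.exp (-(μ * lam β v₀ * t))
  | n + 1 =>
      μ ^ (n + 1) *
        ∫ v₀ : E3, Mβ β v₀ *
          ∫ τ in {τ : Fin (n + 1) → ℝ |
              (∀ i, 0 ≤ τ i ∧ τ i ≤ t) ∧ ∀ i j : Fin (n + 1), i ≤ j → τ j ≤ τ i},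
            ∫ w : Fin (n + 1) → E3,
              (∏ i : Fin (n + 1),
                eFun β (consV v₀ w (Fin.castSucc i)) (consV v₀ w i.succ) /
                  ‖consV v₀ w i.succ - consV v₀ w (Fin.castSucc i)‖) *
              Real.exp (-(μ *
                ((∑ i : Fin (n + 1),
                    lam β (consV v₀ w (Fin.castSucc i)) *
                      (consT t τ (Fin.castSucc i) - consT t τ i.succ)) +
                  lam β (consV v₀ w (Fin.last (n + 1))) *
                    consT t τ (Fin.last (n + 1)))))

/-!
Conjugated by the weight `exp (β‖v‖²/4)`, the collision kernel `e(v,v')/‖v'−v‖` is dominated by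
the translation-invariant kernel `(β/2π)^{1/2} exp(−β‖u‖²/8)/‖u‖` of `u = v' − v`: this is the
elementary inequality `‖y−x‖² + 2‖y‖² − 2‖x‖² ≤ 4 (⟪y, y−x⟫/‖y−x‖)²`, a form of detailed
balance for the Maxwellian. The dominating kernel is integrable on `ℝ³` (its singularity is
`‖u‖⁻¹`), with integral `D` say, so integrating the velocities `vₙ, …, v₁` one at a time costs
a factor `D` each, while the leftover weight is absorbed by `M_β(v₀)`. Bounding the survival
factor by `1` and the time simplex by the cube `[0,t]ⁿ` gives `Ψₙ(μ,t) ≤ K (Dμt)ⁿ`, and for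
`Dμt ≤ 1/2` the series `∑ n² Ψₙ` is dominated by `μt` times a convergent geometric series.
-/

open scoped ENNReal

lemma norm_sub_sq_add_two_mul_sub_le {E : Type*} [NormedAddCommGroup E] [InnerProductSpace ℝ E]
    (x y : E) :
    ‖y - x‖ ^ 2 + 2 * ‖y‖ ^ 2 - 2 * ‖x‖ ^ 2 ≤ 4 * (inner ℝ y (y - x) / ‖y - x‖) ^ 2 := by
  rcases eq_or_ne y x with rfl | hxy
  · simp
  have hr : 0 < ‖y - x‖ ^ 2 := by have := sub_ne_zero.2 hxy; positivity
  have hdiff : inner ℝ y (y - x) - inner ℝ x (y - x) = ‖y - x‖ ^ 2 := by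
    rw [← inner_sub_left, real_inner_self_eq_norm_sq]
  have hsum : inner ℝ y (y - x) + inner ℝ x (y - x) = ‖y‖ ^ 2 - ‖x‖ ^ 2 := by
    rw [← inner_add_left, inner_add_left, inner_sub_right, inner_sub_right,
      real_inner_self_eq_norm_sq, real_inner_self_eq_norm_sq, real_inner_comm x y]
    ring
  rw [div_pow, mul_div_assoc', le_div_iff₀ hr]
  -- after clearing `‖y - x‖²`, the gap between the two sides is `(‖y‖² - ‖x‖²)²`
  nlinarith [sq_nonneg (‖y‖ ^ 2 - ‖x‖ ^ 2)]

section FiniteDimensional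

variable {E : Type*} [NormedAddCommGroup E] [InnerProductSpace ℝ E] [FiniteDimensional ℝ E]
  [MeasurableSpace E] [BorelSpace E]

lemma integrable_exp_neg_mul_sq_norm {b : ℝ} (hb : 0 < b) :
    Integrable (fun v : E => Real.exp (-b * ‖v‖ ^ 2)) :=
  Integrable.of_integral_ne_zero <| by
    rw [GaussianFourier.integral_rexp_neg_mul_sq_norm hb]; positivity

lemma integrable_exp_neg_mul_sq_norm_div_norm (hE : 2 ≤ Module.finrank ℝ E) {b : ℝ}
    (hb : 0 < b) : Integrable (fun v : E => Real.exp (-b * ‖v‖ ^ 2) / ‖v‖) := by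
  have hmeas : AEStronglyMeasurable (fun v : E => Real.exp (-b * ‖v‖ ^ 2) / ‖v‖) :=
    (by fun_prop : Measurable fun v : E => Real.exp (-b * ‖v‖ ^ 2) / ‖v‖).aestronglyMeasurable
  have hexp_le_one (v : E) : Real.exp (-b * ‖v‖ ^ 2) ≤ 1 := by
    rw [Real.exp_le_one_iff]; nlinarith [sq_nonneg ‖v‖]
  rw [← integrableOn_univ, ← Set.union_compl_self (Metric.ball (0 : E) 1), integrableOn_union]
  constructor
  · refine integrableOn_ball_of_norm_le_rpow (C := 1) (α := 1) (by omega)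
      (by exact_mod_cast hE) (Filter.Eventually.of_forall fun v => ?_) hmeas
    rw [Real.rpow_neg_one, one_mul, Real.norm_of_nonneg (by positivity), div_eq_mul_inv]
    exact mul_le_of_le_one_left (by positivity) (hexp_le_one v)
  · refine (integrable_exp_neg_mul_sq_norm hb).integrableOn.mono' hmeas.restrict ?_
    refine (ae_restrict_iff' measurableSet_ball.compl).2 <|
      Filter.Eventually.of_forall fun v hv => ?_
    have hv : 1 ≤ ‖v‖ := by simpa using hv
    rw [Real.norm_of_nonneg (by positivity)]
    exact div_le_self (by positivity) hv

end FiniteDimensional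

lemma integral_le_of_lintegral_ofReal_le {α : Type*} [MeasurableSpace α] {μ : Measure α}
    {f : α → ℝ} (hf : ∀ x, 0 ≤ f x) {c : ℝ} (hc : 0 ≤ c)
    (h : ∫⁻ x, ENNReal.ofReal (f x) ∂μ ≤ ENNReal.ofReal c) : ∫ x, f x ∂μ ≤ c := by
  refine (Real.le_norm_self _).trans <| (norm_integral_le_lintegral_norm f).trans ?_
  simp only [Real.norm_of_nonneg (hf _)]
  exact ENNReal.toReal_le_of_le_ofReal hc h

open Matrix in
theorem lintegral_prod_vecCons_le {α : Type*} [MeasurableSpace α] (μ : Measure α) [SigmaFinite μ]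
    (k : α → α → ℝ≥0∞) (φ : α → ℝ≥0∞) {D : ℝ≥0∞} (hk_top : ∀ x y, k x y ≠ ∞) (hD : D ≠ ∞)
    (hk : ∀ x, ∫⁻ y, k x y * φ y ∂μ ≤ D * φ x) (m : ℕ) (x : α) :
    ∫⁻ w : Fin m → α, (∏ i : Fin m, k (vecCons x w i.castSucc) (vecCons x w i.succ)) *
        φ (vecCons x w (Fin.last m)) ∂Measure.pi (fun _ => μ) ≤ D ^ m * φ x := by
  induction m generalizing x with
  | zero => simp [lintegral_const]
  | succ n ih =>
    set G : (Fin (n + 1) → α) → ℝ≥0∞ := fun w =>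
      (∏ i : Fin (n + 1), k (vecCons x w i.castSucc) (vecCons x w i.succ)) *
        φ (vecCons x w (Fin.last (n + 1)))
    have hG (y : α) (w : Fin n → α) : G (vecCons y w) = k x y *
        ((∏ i : Fin n, k (vecCons y w i.castSucc) (vecCons y w i.succ)) *
          φ (vecCons y w (Fin.last n))) := by
      simp only [G, Fin.prod_univ_succ, Fin.castSucc_zero, cons_val_zero, cons_val_succ,
        ← Fin.succ_castSucc, ← Fin.succ_last]
      ring
    let e := MeasurableEquiv.piFinSuccAbove (fun _ : Fin (n + 1) => α) 0
    have he (p : α × (Fin n → α)) : e.symm p = vecCons p.1 p.2 := by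
      simp [e, MeasurableEquiv.piFinSuccAbove, Fin.insertNthEquiv, Fin.insertNth_zero', vecCons]
    calc ∫⁻ w, G w ∂Measure.pi (fun _ => μ)
        = ∫⁻ p, G (e.symm p) ∂μ.prod (Measure.pi fun _ => μ) :=
          ((measurePreserving_piFinSuccAbove (fun _ => μ) 0).symm.lintegral_comp_emb
            e.symm.measurableEmbedding G).symm
      _ ≤ ∫⁻ y, ∫⁻ w, G (vecCons y w) ∂Measure.pi (fun _ => μ) ∂μ := by
          simpa only [he] using lintegral_prod_le _
      _ ≤ ∫⁻ y, k x y * (D ^ n * φ y) ∂μ := by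
          refine lintegral_mono fun y => ?_
          simp only [hG, lintegral_const_mul' _ _ (hk_top x y)]
          gcongr
          exact ih y
      _ ≤ D ^ (n + 1) * φ x := by
          simp only [mul_left_comm (k x _), lintegral_const_mul' _ _ (ENNReal.pow_ne_top hD)]
          rw [pow_succ, mul_assoc]
          gcongr
          exact hk x

section Boltzmann

variable {β : ℝ}

lemma Mβ_nonneg (hβ : 0 ≤ β) (v : E3) : 0 ≤ Mβ β v := by
  unfold Mβ; positivity

lemma eFun_nonneg (hβ : 0 ≤ β) (v v' : E3) : 0 ≤ eFun β v v' := by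
  unfold eFun; positivity

lemma lam_nonneg (hβ : 0 ≤ β) (v : E3) : 0 ≤ lam β v :=
  mul_nonneg Real.pi_pos.le <| integral_nonneg fun w => mul_nonneg (Mβ_nonneg hβ w) (norm_nonneg _)

lemma Mβ_mul_exp_eq (v : E3) :
    Mβ β v * Real.exp (β / 4 * ‖v‖ ^ 2) =
      (β / (2 * Real.pi)) ^ ((3 : ℝ) / 2) * Real.exp (-(β / 4) * ‖v‖ ^ 2) := by
  rw [Mβ, mul_assoc, ← Real.exp_add]
  ring_nf

lemma integrable_Mβ_mul_exp (hβ : 0 < β) :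
    Integrable (fun v : E3 => Mβ β v * Real.exp (β / 4 * ‖v‖ ^ 2)) := by
  simp only [Mβ_mul_exp_eq]
  exact (integrable_exp_neg_mul_sq_norm (by positivity)).const_mul _

def majorantKernel (β : ℝ) (u : E3) : ℝ :=
  (β / (2 * Real.pi)) ^ ((1 : ℝ) / 2) * (Real.exp (-(β / 8) * ‖u‖ ^ 2) / ‖u‖)

lemma majorantKernel_nonneg (hβ : 0 ≤ β) (u : E3) : 0 ≤ majorantKernel β u := by
  unfold majorantKernel; positivity

lemma integrable_majorantKernel (hβ : 0 < β) : Integrable (majorantKernel β) :=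
  (integrable_exp_neg_mul_sq_norm_div_norm (by simp) (by positivity)).const_mul _

lemma eFun_div_norm_mul_exp_le (hβ : 0 ≤ β) (x y : E3) :
    eFun β x y / ‖y - x‖ * Real.exp (β / 4 * ‖y‖ ^ 2) ≤
      Real.exp (β / 4 * ‖x‖ ^ 2) * majorantKernel β (y - x) := by
  have key := mul_le_mul_of_nonneg_left (norm_sub_sq_add_two_mul_sub_le x y) hβ
  calc eFun β x y / ‖y - x‖ * Real.exp (β / 4 * ‖y‖ ^ 2)
      = (β / (2 * Real.pi)) ^ ((1 : ℝ) / 2) * (Real.exp (-(β / 2) *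
          (inner ℝ y (y - x) / ‖y - x‖) ^ 2 + β / 4 * ‖y‖ ^ 2) / ‖y - x‖) := by
        rw [eFun, Real.exp_add]; ring
    _ ≤ (β / (2 * Real.pi)) ^ ((1 : ℝ) / 2) * (Real.exp (β / 4 * ‖x‖ ^ 2 +
          -(β / 8) * ‖y - x‖ ^ 2) / ‖y - x‖) := by
        gcongr _ * (Real.exp ?_ / _); linarith
    _ = Real.exp (β / 4 * ‖x‖ ^ 2) * majorantKernel β (y - x) := by
        rw [majorantKernel, Real.exp_add]; ring

def timeSimplex (t : ℝ) (m : ℕ) : Set (Fin m → ℝ) :=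
  {τ | (∀ i, 0 ≤ τ i ∧ τ i ≤ t) ∧ ∀ i j : Fin m, i ≤ j → τ j ≤ τ i}

def collisionKernelProd (β : ℝ) {m : ℕ} (v₀ : E3) (w : Fin m → E3) : ℝ :=
  ∏ i : Fin m, eFun β (consV v₀ w (Fin.castSucc i)) (consV v₀ w i.succ) /
    ‖consV v₀ w i.succ - consV v₀ w (Fin.castSucc i)‖

def survivalExponent (β t : ℝ) {m : ℕ} (v₀ : E3) (τ : Fin m → ℝ) (w : Fin m → E3) : ℝ :=
  (∑ i : Fin m, lam β (consV v₀ w (Fin.castSucc i)) *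
      (consT t τ (Fin.castSucc i) - consT t τ i.succ)) +
    lam β (consV v₀ w (Fin.last m)) * consT t τ (Fin.last m)

lemma Psi_succ (β μ t : ℝ) (n : ℕ) :
    Psi β μ t (n + 1) = μ ^ (n + 1) * ∫ v₀, Mβ β v₀ * ∫ τ in timeSimplex t (n + 1),
      ∫ w, collisionKernelProd β v₀ w * Real.exp (-(μ * survivalExponent β t v₀ τ w)) :=
  rfl

lemma zero_mem_timeSimplex {t : ℝ} (ht : 0 ≤ t) (m : ℕ) : 0 ∈ timeSimplex t m :=
  ⟨fun _ => ⟨le_rfl, ht⟩, fun _ _ _ => le_rfl⟩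

lemma volume_timeSimplex_le (t : ℝ) (m : ℕ) :
    volume (timeSimplex t m) ≤ ENNReal.ofReal t ^ m := by
  calc volume (timeSimplex t m) ≤ volume (Set.univ.pi fun _ : Fin m => Set.Icc 0 t) :=
        measure_mono fun τ hτ i _ => hτ.1 i
    _ = ENNReal.ofReal t ^ m := by rw [volume_pi_pi]; simp

lemma setIntegral_timeSimplex_le {t : ℝ} (ht : 0 ≤ t) {m : ℕ} {f : (Fin m → ℝ) → ℝ} {C : ℝ}
    (hf0 : ∀ τ ∈ timeSimplex t m, 0 ≤ f τ) (hfC : ∀ τ ∈ timeSimplex t m, f τ ≤ C) :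
    ∫ τ in timeSimplex t m, f τ ≤ C * t ^ m := by
  have hC : 0 ≤ C := (hf0 0 (zero_mem_timeSimplex ht m)).trans (hfC 0 (zero_mem_timeSimplex ht m))
  have hvol := volume_timeSimplex_le t m
  calc ∫ τ in timeSimplex t m, f τ
      ≤ C * volume.real (timeSimplex t m) :=
        (Real.le_norm_self _).trans <| norm_setIntegral_le_of_norm_le_const
          (hvol.trans_lt (by simp)) fun τ hτ => by
            rw [Real.norm_of_nonneg (hf0 τ hτ)]; exact hfC τ hτ
    _ ≤ C * t ^ m := by
        gcongr
        exact ENNReal.toReal_le_of_le_ofReal (by positivity) (by rwa [ENNReal.ofReal_pow ht])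

lemma consT_nonneg {t : ℝ} (ht : 0 ≤ t) {m : ℕ} {τ : Fin m → ℝ} (hτ : τ ∈ timeSimplex t m)
    (j : Fin (m + 1)) : 0 ≤ consT t τ j :=
  Fin.cases ht (fun i => (hτ.1 i).1) j

lemma consT_castSucc_sub_succ_nonneg {t : ℝ} {m : ℕ} {τ : Fin m → ℝ}
    (hτ : τ ∈ timeSimplex t m) (i : Fin m) : 0 ≤ consT t τ i.castSucc - consT t τ i.succ := by
  obtain _ | m := m
  · exact i.elim0
  refine sub_nonneg.2 (Fin.cases ?_ (fun j => ?_) i)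
  · exact (hτ.1 0).2
  · show τ j.succ ≤ τ j.castSucc
    exact hτ.2 _ _ (Fin.castSucc_le_succ j)

lemma survivalExponent_nonneg (hβ : 0 ≤ β) {t : ℝ} (ht : 0 ≤ t) {m : ℕ} (v₀ : E3)
    {τ : Fin m → ℝ} (hτ : τ ∈ timeSimplex t m) (w : Fin m → E3) :
    0 ≤ survivalExponent β t v₀ τ w :=
  add_nonneg (Finset.sum_nonneg fun i _ =>
      mul_nonneg (lam_nonneg hβ _) (consT_castSucc_sub_succ_nonneg hτ i))
    (mul_nonneg (lam_nonneg hβ _) (consT_nonneg ht hτ _))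

lemma collisionKernelProd_nonneg (hβ : 0 ≤ β) {m : ℕ} (v₀ : E3) (w : Fin m → E3) :
    0 ≤ collisionKernelProd β v₀ w :=
  Finset.prod_nonneg fun _ _ => div_nonneg (eFun_nonneg hβ _ _) (norm_nonneg _)

lemma lintegral_eFun_div_norm_mul_exp_le (hβ : 0 < β) (x : E3) :
    ∫⁻ y, ENNReal.ofReal (eFun β x y / ‖y - x‖) * ENNReal.ofReal (Real.exp (β / 4 * ‖y‖ ^ 2)) ≤
      ENNReal.ofReal (∫ u, majorantKernel β u) * ENNReal.ofReal (Real.exp (β / 4 * ‖x‖ ^ 2)) :=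
  calc _ ≤ ∫⁻ y, ENNReal.ofReal (Real.exp (β / 4 * ‖x‖ ^ 2)) *
        ENNReal.ofReal (majorantKernel β (y - x)) := lintegral_mono fun y => by
          rw [← ENNReal.ofReal_mul (div_nonneg (eFun_nonneg hβ.le _ _) (norm_nonneg _)),
            ← ENNReal.ofReal_mul (Real.exp_pos _).le]
          exact ENNReal.ofReal_le_ofReal (eFun_div_norm_mul_exp_le hβ.le x y)
    _ = _ := by
        rw [lintegral_const_mul' _ _ ENNReal.ofReal_ne_top,
          lintegral_sub_right_eq_self (fun u => ENNReal.ofReal (majorantKernel β u)),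
          ← ofReal_integral_eq_lintegral_ofReal (integrable_majorantKernel hβ)
            (Filter.Eventually.of_forall (majorantKernel_nonneg hβ.le)), mul_comm]

lemma integral_collisionKernelProd_mul_le (hβ : 0 < β) {m : ℕ} (v₀ : E3)
    {g : (Fin m → E3) → ℝ} (hg0 : ∀ w, 0 ≤ g w) (hg1 : ∀ w, g w ≤ 1) :
    ∫ w, collisionKernelProd β v₀ w * g w ≤
      (∫ u, majorantKernel β u) ^ m * Real.exp (β / 4 * ‖v₀‖ ^ 2) := by
  have hD : 0 ≤ ∫ u, majorantKernel β u := integral_nonneg (majorantKernel_nonneg hβ.le)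
  have hkernel (w : Fin m → E3) := collisionKernelProd_nonneg hβ.le v₀ w
  refine integral_le_of_lintegral_ofReal_le (fun w => mul_nonneg (hkernel w) (hg0 w))
    (by positivity) ?_
  rw [ENNReal.ofReal_mul (by positivity), ENNReal.ofReal_pow hD]
  refine le_trans (lintegral_mono fun w => ?_) <| lintegral_prod_vecCons_le volume
    (fun x y => ENNReal.ofReal (eFun β x y / ‖y - x‖))
    (fun y => ENNReal.ofReal (Real.exp (β / 4 * ‖y‖ ^ 2)))
    (fun _ _ => ENNReal.ofReal_ne_top) ENNReal.ofReal_ne_top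
    (lintegral_eFun_div_norm_mul_exp_le hβ) m v₀
  calc ENNReal.ofReal (collisionKernelProd β v₀ w * g w)
      ≤ ENNReal.ofReal (collisionKernelProd β v₀ w) :=
        ENNReal.ofReal_le_ofReal (mul_le_of_le_one_right (hkernel w) (hg1 w))
    _ ≤ ENNReal.ofReal (collisionKernelProd β v₀ w) *
          ENNReal.ofReal (Real.exp (β / 4 * ‖consV v₀ w (Fin.last m)‖ ^ 2)) :=
        le_mul_of_one_le_right' (ENNReal.one_le_ofReal.2 (Real.one_le_exp (by positivity)))
    _ = _ := by
        rw [collisionKernelProd, ENNReal.ofReal_prod_of_nonneg fun _ _ =>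
          div_nonneg (eFun_nonneg hβ.le _ _) (norm_nonneg _)]
        rfl

lemma integral_collisionKernelProd_mul_exp_nonneg (hβ : 0 ≤ β) {m : ℕ} (v₀ : E3)
    (s : (Fin m → E3) → ℝ) : 0 ≤ ∫ w, collisionKernelProd β v₀ w * Real.exp (s w) :=
  integral_nonneg fun w => mul_nonneg (collisionKernelProd_nonneg hβ v₀ w) (Real.exp_pos _).le

lemma Psi_nonneg (hβ : 0 ≤ β) {μ : ℝ} (hμ : 0 ≤ μ) (t : ℝ) (n : ℕ) : 0 ≤ Psi β μ t n := by
  cases n with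
  | zero => exact integral_nonneg fun v => mul_nonneg (Mβ_nonneg hβ v) (Real.exp_pos _).le
  | succ n =>
    rw [Psi_succ]
    exact mul_nonneg (pow_nonneg hμ _) <| integral_nonneg fun v₀ => mul_nonneg (Mβ_nonneg hβ v₀) <|
      integral_nonneg fun _ => integral_collisionKernelProd_mul_exp_nonneg hβ v₀ _

lemma Psi_succ_le (hβ : 0 < β) {μ t : ℝ} (hμ : 0 ≤ μ) (ht : 0 ≤ t) (n : ℕ) :
    Psi β μ t (n + 1) ≤ (∫ v, Mβ β v * Real.exp (β / 4 * ‖v‖ ^ 2)) *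
      ((∫ u, majorantKernel β u) * (μ * t)) ^ (n + 1) := by
  set D := ∫ u, majorantKernel β u
  have htime (v₀ : E3) : ∫ τ in timeSimplex t (n + 1), ∫ w, collisionKernelProd β v₀ w *
      Real.exp (-(μ * survivalExponent β t v₀ τ w)) ≤
        D ^ (n + 1) * Real.exp (β / 4 * ‖v₀‖ ^ 2) * t ^ (n + 1) := by
    refine setIntegral_timeSimplex_le ht
      (fun _ _ => integral_collisionKernelProd_mul_exp_nonneg hβ.le v₀ _) fun τ hτ => ?_
    refine integral_collisionKernelProd_mul_le hβ v₀ (fun _ => (Real.exp_pos _).le) fun w => ?_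
    exact Real.exp_le_one_iff.2 <| neg_nonpos.2 <|
      mul_nonneg hμ (survivalExponent_nonneg hβ.le ht v₀ hτ w)
  calc Psi β μ t (n + 1)
      ≤ μ ^ (n + 1) * ∫ v₀, (D ^ (n + 1) * t ^ (n + 1)) *
          (Mβ β v₀ * Real.exp (β / 4 * ‖v₀‖ ^ 2)) := by
        rw [Psi_succ]
        refine mul_le_mul_of_nonneg_left ?_ (pow_nonneg hμ _)
        refine integral_mono_of_nonneg (Filter.Eventually.of_forall fun v₀ => ?_)
          ((integrable_Mβ_mul_exp hβ).const_mul _) (Filter.Eventually.of_forall fun v₀ => ?_)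
        · exact mul_nonneg (Mβ_nonneg hβ.le v₀) <|
            integral_nonneg fun _ => integral_collisionKernelProd_mul_exp_nonneg hβ.le v₀ _
        · calc _ ≤ Mβ β v₀ * (D ^ (n + 1) * Real.exp (β / 4 * ‖v₀‖ ^ 2) * t ^ (n + 1)) :=
                mul_le_mul_of_nonneg_left (htime v₀) (Mβ_nonneg hβ.le v₀)
            _ = _ := by ring
    _ = _ := by rw [integral_const_mul]; ring

end Boltzmann

lemma summable_and_tsum_sq_mul_le {f : ℕ → ℝ} {K x : ℝ} (hf0 : ∀ n, 0 ≤ f n) (hK : 0 ≤ K)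
    (hf : ∀ n, f (n + 1) ≤ K * x ^ (n + 1)) (hx0 : 0 ≤ x) (hx : x ≤ 1 / 2) :
    Summable (fun n : ℕ => (n : ℝ) ^ 2 * f n) ∧
      ∑' n : ℕ, (n : ℝ) ^ 2 * f n ≤ 2 * K * (∑' n : ℕ, (n : ℝ) ^ 2 * (1 / 2 : ℝ) ^ n) * x := by
  have hgeom : Summable (fun n : ℕ => (n : ℝ) ^ 2 * (1 / 2 : ℝ) ^ n) := by
    simpa using summable_pow_mul_geometric_of_norm_lt_one 2 (r := (1 / 2 : ℝ)) (by norm_num)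
  have hle (n : ℕ) : (n : ℝ) ^ 2 * f n ≤ 2 * K * x * ((n : ℝ) ^ 2 * (1 / 2 : ℝ) ^ n) := by
    cases n with
    | zero => simp
    | succ n =>
      calc ((n + 1 : ℕ) : ℝ) ^ 2 * f (n + 1) ≤ ((n + 1 : ℕ) : ℝ) ^ 2 * (K * (x * x ^ n)) := by
            rw [← pow_succ']; gcongr; exact hf n
        _ ≤ ((n + 1 : ℕ) : ℝ) ^ 2 * (K * (x * (1 / 2) ^ n)) := by gcongr
        _ = _ := by ring
  have hsum := hgeom.mul_left (2 * K * x)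
  have hsummable := hsum.of_nonneg_of_le (fun n => mul_nonneg (by positivity) (hf0 n)) hle
  refine ⟨hsummable, ?_⟩
  calc ∑' n : ℕ, (n : ℝ) ^ 2 * f n ≤ ∑' n : ℕ, 2 * K * x * ((n : ℝ) ^ 2 * (1 / 2 : ℝ) ^ n) :=
        hsummable.tsum_le_tsum hle hsum
    _ = _ := by rw [tsum_mul_left]; ring

/-- Short-time bound on the second moment of the number of collisions of the stationary
linear Boltzmann jump process: there are `C, c > 0` (depending only on `β`) such that
for all `μ > 0`, `t ≥ 0` with `μt ≤ c`, the series `Σ n² Ψ_n(μ,t)` converges and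
`Σ_{n≥0} n² Ψ_n(μ,t) ≤ C (μt + (μt)²)`. -/
theorem second_moment_collisions_short_time (β : ℝ) (hβ : 0 < β) :
    ∃ C c : ℝ, 0 < C ∧ 0 < c ∧ ∀ μ t : ℝ, 0 < μ → 0 ≤ t → μ * t ≤ c →
      Summable (fun n : ℕ => (n : ℝ) ^ 2 * Psi β μ t n) ∧
      (∑' n : ℕ, (n : ℝ) ^ 2 * Psi β μ t n) ≤ C * (μ * t + (μ * t) ^ 2) := by
  set K := ∫ v, Mβ β v * Real.exp (β / 4 * ‖v‖ ^ 2)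
  set D := ∫ u, majorantKernel β u
  set T := ∑' n : ℕ, (n : ℝ) ^ 2 * (1 / 2 : ℝ) ^ n
  have hK : 0 ≤ K := integral_nonneg fun v => mul_nonneg (Mβ_nonneg hβ.le v) (Real.exp_pos _).le
  have hD : 0 ≤ D := integral_nonneg (majorantKernel_nonneg hβ.le)
  have hT : 0 ≤ T := tsum_nonneg fun n => by positivity
  refine ⟨2 * K * T * (D + 1) + 1, 1 / (2 * (D + 1)), by positivity, by positivity,
    fun μ t hμ ht hμt => ?_⟩
  have hx : (D + 1) * (μ * t) ≤ 1 / 2 := by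
    rw [le_div_iff₀ (by positivity)] at hμt; linarith
  obtain ⟨hs, hle⟩ := summable_and_tsum_sq_mul_le (Psi_nonneg hβ.le hμ.le t) hK
    (fun n => (Psi_succ_le hβ hμ.le ht n).trans (by gcongr; linarith)) (by positivity) hx
  have hP : 0 ≤ 2 * K * T * (D + 1) := by positivity
  refine ⟨hs, hle.trans ?_⟩
  nlinarith [mul_nonneg hP (sq_nonneg (μ * t))]
end
end
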